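/- arXiv:2503.09026 — 2 statements merged into one kernel-verified Lean document; each statement's English description precedes it below -/
import Mathlib

section
/- Let C > 0, m ≥ 1, and let M ∈ ℝ^{m×m} be a symmetric positive semidefinite matrix whose smallest eigenvalue satisfies λ_min(M) ≥ 1/C². Let β* ∈ ℝ^m, let S = {l : β*_l ≠ 0} and s = |S|, let e ∈ ℝ^m, and set b = β* + e. Let λ ≥ 2‖M e‖_∞ and let β̃ be any global minimizer over ℝ^m of F(β) = (1/2)(b − β)ᵀ M (b − β) + λ ‖β‖_1. Then ‖β̃ − β*‖_2 ≤ 3 λ C² √s. -/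
open scoped Classical
open Matrix Finset

/-- Vector ℓ1 norm. -/
noncomputable def l1 {ι : Type*} [Fintype ι] (x : ι → ℝ) : ℝ := ∑ i, |x i|

/-- Vector ℓ2 norm. -/
noncomputable def l2 {ι : Type*} [Fintype ι] (x : ι → ℝ) : ℝ := Real.sqrt (∑ i, x i ^ 2)

/-- Vector ℓ∞ norm. -/
noncomputable def linf {ι : Type*} [Fintype ι] (x : ι → ℝ) : ℝ := ⨆ i, |x i|

lemma rayleigh_lb {m : ℕ} (M : Matrix (Fin m) (Fin m) ℝ) (hM : M.IsHermitian) (c : ℝ)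
    (h : ∀ i, c ≤ hM.eigenvalues i) (x : Fin m → ℝ) :
    c * (x ⬝ᵥ x) ≤ x ⬝ᵥ M *ᵥ x := by
  set U : Matrix (Fin m) (Fin m) ℝ := (hM.eigenvectorUnitary : Matrix (Fin m) (Fin m) ℝ) with hU
  have hUt : star U = Uᵀ := by
    rw [Matrix.star_eq_conjTranspose, Matrix.conjTranspose_eq_transpose_of_trivial]
  set y : Fin m → ℝ := star U *ᵥ x with hy
  have hxU : x ᵥ* U = y := by
    rw [hy, hUt, ← Matrix.transpose_transpose U, Matrix.vecMul_transpose,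
      Matrix.transpose_transpose]
  have hyy : y ⬝ᵥ y = x ⬝ᵥ x := by
    conv_lhs => rw [hy, Matrix.dotProduct_mulVec]
    have : y ᵥ* star U = x := by
      rw [hUt, Matrix.vecMul_transpose, hy, Matrix.mulVec_mulVec, hM.eigenvectorUnitary.2.2,
        Matrix.one_mulVec]
    rw [this]
  have key : x ⬝ᵥ M *ᵥ x = ∑ i, hM.eigenvalues i * y i ^ 2 := by
    conv_lhs => rw [hM.spectral_theorem, Unitary.conjStarAlgAut_apply]
    rw [← Matrix.mulVec_mulVec, ← Matrix.mulVec_mulVec, Matrix.dotProduct_mulVec, hxU]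
    simp only [dotProduct, Matrix.mulVec_diagonal]
    refine Finset.sum_congr rfl fun i _ => ?_
    simp [hy]
    ring
  rw [key, ← hyy]
  have : c * (y ⬝ᵥ y) = ∑ i, c * y i ^ 2 := by
    simp [dotProduct, Finset.mul_sum, sq]
  rw [this]
  exact Finset.sum_le_sum fun i _ => mul_le_mul_of_nonneg_right (h i) (sq_nonneg _)

/-- Proposition 1: deterministic ℓ2 error bound for the lasso with known weight
matrix `M` whose smallest eigenvalue is at least `1/C²`. -/
theorem stmt0 {m : ℕ} (hm : 1 ≤ m) (C : ℝ) (hC : 0 < C)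
    (M : Matrix (Fin m) (Fin m) ℝ) (hM : M.PosSemidef)
    (hmin : ∀ i, 1 / C ^ 2 ≤ hM.1.eigenvalues i)
    (βs e : Fin m → ℝ)
    (S : Finset (Fin m)) (hS : S = Finset.univ.filter (fun i => βs i ≠ 0))
    (s : ℕ) (hs : s = S.card)
    (b : Fin m → ℝ) (hb : b = βs + e)
    (lam : ℝ) (hlam : 2 * linf (M *ᵥ e) ≤ lam)
    (βt : Fin m → ℝ)
    (hopt : ∀ β : Fin m → ℝ,
      (1 / 2) * ((b - βt) ⬝ᵥ M *ᵥ (b - βt)) + lam * l1 βt ≤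
        (1 / 2) * ((b - β) ⬝ᵥ M *ᵥ (b - β)) + lam * l1 β) :
    l2 (βt - βs) ≤ 3 * lam * C ^ 2 * Real.sqrt s := by
  obtain ⟨h, hh⟩ : ∃ h : Fin m → ℝ, h = βt - βs := ⟨_, rfl⟩
  rw [show βt - βs = h from hh.symm]
  -- λ ≥ 0
  have hK : ∀ i, |(M *ᵥ e) i| ≤ linf (M *ᵥ e) := by
    intro i
    simp only [linf]
    exact le_ciSup (Set.Finite.bddAbove (Set.finite_range fun j => |(M *ᵥ e) j|)) i
  have hK0 : 0 ≤ linf (M *ᵥ e) := le_trans (abs_nonneg _) (hK ⟨0, hm⟩)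
  have hlam0 : 0 ≤ lam := by linarith
  -- symmetry of the quadratic form
  have hMT : Mᵀ = M := by
    rw [← Matrix.conjTranspose_eq_transpose_of_trivial]; exact hM.1
  have hsym : ∀ x y : Fin m → ℝ, x ⬝ᵥ M *ᵥ y = y ⬝ᵥ M *ᵥ x := by
    intro x y
    rw [Matrix.dotProduct_mulVec, ← hMT, Matrix.vecMul_transpose, hMT, dotProduct_comm]
  -- basic inequality from optimality at β = βs
  have hbs : b - βs = e := by rw [hb]; abel
  have hbt : b - βt = e - h := by rw [hb, hh]; abel
  have hexp : (e - h) ⬝ᵥ M *ᵥ (e - h)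
      = e ⬝ᵥ M *ᵥ e - 2 * (h ⬝ᵥ M *ᵥ e) + h ⬝ᵥ M *ᵥ h := by
    rw [Matrix.mulVec_sub, dotProduct_sub, sub_dotProduct,
      sub_dotProduct, hsym e h]
    ring
  have hbasic : (1 / 2) * (h ⬝ᵥ M *ᵥ h)
      ≤ h ⬝ᵥ M *ᵥ e + lam * (l1 βs - l1 βt) := by
    have := hopt βs
    rw [hbs, hbt, hexp] at this
    linarith
  -- bound the cross term
  have hcross : h ⬝ᵥ M *ᵥ e ≤ (lam / 2) * l1 h := by
    have h1 : h ⬝ᵥ M *ᵥ e ≤ ∑ i, |h i| * linf (M *ᵥ e) := by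
      rw [dotProduct]
      refine Finset.sum_le_sum fun i _ => ?_
      calc h i * (M *ᵥ e) i ≤ |h i * (M *ᵥ e) i| := le_abs_self _
        _ = |h i| * |(M *ᵥ e) i| := abs_mul _ _
        _ ≤ |h i| * linf (M *ᵥ e) := mul_le_mul_of_nonneg_left (hK i) (abs_nonneg _)
    have h2 : ∑ i, |h i| * linf (M *ᵥ e) = linf (M *ᵥ e) * l1 h := by
      rw [l1, Finset.mul_sum]; exact Finset.sum_congr rfl fun i _ => mul_comm _ _
    have h3 : 0 ≤ l1 h := Finset.sum_nonneg fun i _ => abs_nonneg _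
    nlinarith
  -- l1 splitting over S and Sᶜ
  set a : ℝ := ∑ i ∈ S, |h i| with ha
  set bd : ℝ := ∑ i ∈ Sᶜ, |h i| with hbd
  have ha0 : 0 ≤ a := Finset.sum_nonneg fun i _ => abs_nonneg _
  have hbd0 : 0 ≤ bd := Finset.sum_nonneg fun i _ => abs_nonneg _
  have hl1h : l1 h = a + bd := by
    rw [l1, ha, hbd, ← Finset.sum_add_sum_compl S]
  have hzero : ∀ i ∈ Sᶜ, βs i = 0 := by
    intro i hi
    rw [Finset.mem_compl, hS, Finset.mem_filter] at hi
    by_contra hne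
    exact hi ⟨Finset.mem_univ i, hne⟩
  have hD : l1 βs - l1 βt ≤ a - bd := by
    have e1 : l1 βs = ∑ i ∈ S, |βs i| + ∑ i ∈ Sᶜ, |βs i| :=
      (Finset.sum_add_sum_compl S _).symm
    have e2 : l1 βt = ∑ i ∈ S, |βt i| + ∑ i ∈ Sᶜ, |βt i| :=
      (Finset.sum_add_sum_compl S _).symm
    have e3 : ∑ i ∈ Sᶜ, |βs i| = 0 :=
      Finset.sum_eq_zero fun i hi => by rw [hzero i hi, abs_zero]
    have e4 : ∑ i ∈ Sᶜ, |βt i| = bd := by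
      refine Finset.sum_congr rfl fun i hi => ?_
      rw [hh, Pi.sub_apply, hzero i hi, sub_zero]
    have e5 : ∑ i ∈ S, |βs i| - ∑ i ∈ S, |βt i| ≤ a := by
      rw [ha, ← Finset.sum_sub_distrib]
      refine Finset.sum_le_sum fun i _ => ?_
      calc |βs i| - |βt i| ≤ |βs i - βt i| := abs_sub_abs_le_abs_sub _ _
        _ = |h i| := by rw [hh]; simp [abs_sub_comm]
    rw [e1, e2, e3, e4]
    linarith
  -- combine
  have hmain : h ⬝ᵥ M *ᵥ h ≤ 3 * lam * a := by
    have := hbasic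
    rw [hl1h] at hcross
    nlinarith
  -- Cauchy–Schwarz on S
  set L : ℝ := l2 h with hL
  have hL0 : 0 ≤ L := Real.sqrt_nonneg _
  have hsum0 : 0 ≤ ∑ i, h i ^ 2 := Finset.sum_nonneg fun i _ => sq_nonneg _
  have hL2 : L ^ 2 = ∑ i, h i ^ 2 := Real.sq_sqrt hsum0
  have hCS : a ≤ Real.sqrt s * L := by
    have c1 : a ^ 2 ≤ (s : ℝ) * ∑ i, h i ^ 2 := by
      have := Finset.sum_mul_sq_le_sq_mul_sq S (fun _ => (1 : ℝ)) (fun i => |h i|)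
      simp only [one_mul, one_pow] at this
      have hcard : ∑ _i ∈ S, (1 : ℝ) = (s : ℝ) := by
        rw [Finset.sum_const, hs]; simp
      have hsub : ∑ i ∈ S, |h i| ^ 2 ≤ ∑ i, h i ^ 2 := by
        have : ∀ i, |h i| ^ 2 = h i ^ 2 := fun i => sq_abs _
        simp only [this]
        exact Finset.sum_le_sum_of_subset_of_nonneg (Finset.subset_univ S)
          (fun i _ _ => sq_nonneg _)
      calc a ^ 2 ≤ (∑ _i ∈ S, (1 : ℝ)) * ∑ i ∈ S, |h i| ^ 2 := this
        _ = (s : ℝ) * ∑ i ∈ S, |h i| ^ 2 := by rw [hcard]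
        _ ≤ (s : ℝ) * ∑ i, h i ^ 2 := by
            exact mul_le_mul_of_nonneg_left hsub (Nat.cast_nonneg s)
    calc a = Real.sqrt (a ^ 2) := (Real.sqrt_sq ha0).symm
      _ ≤ Real.sqrt ((s : ℝ) * ∑ i, h i ^ 2) := Real.sqrt_le_sqrt c1
      _ = Real.sqrt s * L := by
          rw [Real.sqrt_mul (Nat.cast_nonneg s), hL, l2]
  -- Rayleigh lower bound
  have hray : (1 / C ^ 2) * L ^ 2 ≤ h ⬝ᵥ M *ᵥ h := by
    have := rayleigh_lb M hM.1 (1 / C ^ 2) hmin h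
    have hxx : h ⬝ᵥ h = L ^ 2 := by
      rw [hL2, dotProduct]; exact Finset.sum_congr rfl fun i _ => (sq (h i)).symm
    rwa [hxx] at this
  -- finish
  have hC2 : (0 : ℝ) < C ^ 2 := by positivity
  have hfinal : L ^ 2 ≤ 3 * lam * C ^ 2 * Real.sqrt s * L := by
    have h1 : (1 / C ^ 2) * L ^ 2 ≤ 3 * lam * (Real.sqrt s * L) := by
      calc (1 / C ^ 2) * L ^ 2 ≤ h ⬝ᵥ M *ᵥ h := hray
        _ ≤ 3 * lam * a := hmain
        _ ≤ 3 * lam * (Real.sqrt s * L) := by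
            exact mul_le_mul_of_nonneg_left hCS (by linarith)
    calc L ^ 2 = C ^ 2 * ((1 / C ^ 2) * L ^ 2) := by field_simp
      _ ≤ C ^ 2 * (3 * lam * (Real.sqrt s * L)) := mul_le_mul_of_nonneg_left h1 hC2.le
      _ = 3 * lam * C ^ 2 * Real.sqrt s * L := by ring
  rcases eq_or_lt_of_le hL0 with h0 | h0
  · rw [← h0]
    exact mul_nonneg (mul_nonneg (by linarith : (0:ℝ) ≤ 3 * lam) hC2.le)
      (Real.sqrt_nonneg _)
  · have := hfinal
    nlinarith
end

section
/- Let C > 0, m ≥ 1, let M̂ ∈ ℝ^{m×m} be symmetric positive semidefinite, let β* ∈ ℝ^m with S = {l : β*_l ≠ 0} and s = |S|, let e ∈ ℝ^m, and set b = β* + e. Suppose λ > 0 with λ ≥ 2‖M̂ e‖_∞, and suppose that for every α ∈ ℝ^m satisfying ‖α_{S^c}‖_1 ≤ 3‖α_S‖_1 one has αᵀ M̂ α ≥ ‖α‖_2² / (2C²). Then any global minimizer β̂ over ℝ^m of F(β) = (1/2)(b − β)ᵀ M̂ (b − β) + λ ‖β‖_1 satisfies ‖β̂ − β*‖_1 ≤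 24 λ C² s. -/
open scoped Classical
open Matrix Finset

/-- Restriction of a vector to an index set: agrees with `x` on `S`, zero outside. -/
def restr {ι : Type*} [DecidableEq ι] (S : Finset ι) (x : ι → ℝ) : ι → ℝ :=
  fun i => if i ∈ S then x i else 0

set_option maxHeartbeats 1000000 in
/-- Deterministic core of Lemma 4: ℓ1 error bound for the lasso under a
restricted eigenvalue condition with constant `1/(2C²)` on the cone. -/
theorem stmt5 {m : ℕ} (hm : 1 ≤ m) (C : ℝ) (hC : 0 < C)
    (Mh : Matrix (Fin m) (Fin m) ℝ) (hMh : Mh.PosSemidef)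
    (βs e : Fin m → ℝ)
    (S : Finset (Fin m)) (hS : S = Finset.univ.filter (fun i => βs i ≠ 0))
    (s : ℕ) (hs : s = S.card)
    (b : Fin m → ℝ) (hb : b = βs + e)
    (lam : ℝ) (hlampos : 0 < lam) (hlam : 2 * linf (Mh *ᵥ e) ≤ lam)
    (hRE : ∀ α : Fin m → ℝ, l1 (restr Sᶜ α) ≤ 3 * l1 (restr S α) →
      l2 α ^ 2 / (2 * C ^ 2) ≤ α ⬝ᵥ Mh *ᵥ α)
    (βh : Fin m → ℝ)
    (hopt : ∀ β : Fin m → ℝ,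
      (1 / 2) * ((b - βh) ⬝ᵥ Mh *ᵥ (b - βh)) + lam * l1 βh ≤
        (1 / 2) * ((b - β) ⬝ᵥ Mh *ᵥ (b - β)) + lam * l1 β) :
    l1 (βh - βs) ≤ 24 * lam * C ^ 2 * s := by
  set Δ : Fin m → ℝ := βh - βs with hΔ
  have hΔi : ∀ i, Δ i = βh i - βs i := fun i => rfl
  -- symmetry of Mh
  have hMsym : Mhᵀ = Mh := by
    ext i j
    have := congrFun (congrFun hMh.1 i) j
    simpa [Matrix.conjTranspose_apply] using this
  have hsym : ∀ x y : Fin m → ℝ, x ⬝ᵥ Mh *ᵥ y = y ⬝ᵥ Mh *ᵥ x := by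
    intro x y
    rw [Matrix.dotProduct_mulVec, ← Matrix.mulVec_transpose, hMsym,
      dotProduct_comm]
  -- nonnegativity of the quadratic form
  have hQ0 : 0 ≤ Δ ⬝ᵥ Mh *ᵥ Δ := by simpa using hMh.dotProduct_mulVec_nonneg Δ
  -- basic inequality
  have hb1 : b - βs = e := by rw [hb]; abel
  have hb2 : b - βh = e - Δ := by rw [hb, hΔ]; abel
  have hexp : (e - Δ) ⬝ᵥ Mh *ᵥ (e - Δ)
      = e ⬝ᵥ Mh *ᵥ e - 2 * (Δ ⬝ᵥ Mh *ᵥ e) + Δ ⬝ᵥ Mh *ᵥ Δ := by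
    rw [sub_dotProduct, Matrix.mulVec_sub, dotProduct_sub,
      dotProduct_sub, hsym e Δ]
    ring
  have hopt' := hopt βs
  rw [hb1, hb2, hexp] at hopt'
  -- bound on the cross term
  have hl1nonneg : ∀ x : Fin m → ℝ, 0 ≤ l1 x := fun x =>
    Finset.sum_nonneg fun i _ => abs_nonneg _
  have hT : Δ ⬝ᵥ Mh *ᵥ e ≤ (lam / 2) * l1 Δ := by
    have hvb : ∀ i, |(Mh *ᵥ e) i| ≤ lam / 2 := by
      intro i
      have h1 : |(Mh *ᵥ e) i| ≤ linf (Mh *ᵥ e) := by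
        rw [linf]
        exact le_ciSup (f := fun j => |(Mh *ᵥ e) j|)
          (Set.Finite.bddAbove (Set.finite_range _)) i
      linarith
    calc Δ ⬝ᵥ (Mh *ᵥ e) = ∑ i, Δ i * (Mh *ᵥ e) i := rfl
      _ ≤ ∑ i, |Δ i| * (lam / 2) := by
          refine Finset.sum_le_sum fun i _ => ?_
          calc Δ i * (Mh *ᵥ e) i ≤ |Δ i * (Mh *ᵥ e) i| := le_abs_self _
            _ = |Δ i| * |(Mh *ᵥ e) i| := abs_mul _ _
            _ ≤ |Δ i| * (lam / 2) :=
              mul_le_mul_of_nonneg_left (hvb i) (abs_nonneg _)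
      _ = (lam / 2) * l1 Δ := by rw [l1, ← Finset.sum_mul]; ring
  -- l1 decompositions
  set A := l1 (restr S Δ) with hAdef
  set B := l1 (restr Sᶜ Δ) with hBdef
  have hA : A = ∑ i ∈ S, |Δ i| := by
    rw [hAdef, l1]
    simp only [restr, apply_ite abs, abs_zero]
    rw [Finset.sum_ite_mem, Finset.univ_inter]
  have hB : B = ∑ i ∈ Sᶜ, |Δ i| := by
    rw [hBdef, l1]
    simp only [restr, apply_ite abs, abs_zero]
    rw [Finset.sum_ite_mem, Finset.univ_inter]
  have hsplit : l1 Δ = A + B := by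
    rw [hA, hB, l1, ← Finset.sum_add_sum_compl S]
  have hAnn : 0 ≤ A := hAdef ▸ hl1nonneg _
  have hBnn : 0 ≤ B := hBdef ▸ hl1nonneg _
  -- the ℓ1 norm comparison
  have h4 : l1 βs - l1 βh ≤ A - B := by
    have key : ∀ i : Fin m, |βs i| - |βh i| ≤
        (if i ∈ S then |Δ i| else 0) - (if i ∈ Sᶜ then |Δ i| else 0) := by
      intro i
      by_cases hi : i ∈ S
      · simp only [hi, if_pos, Finset.mem_compl, not_true, if_neg, not_not,
          not_false_iff]
        have : |βs i| - |βh i| ≤ |βs i - βh i| := abs_sub_abs_le_abs_sub _ _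
        rw [abs_sub_comm] at this
        rw [hΔi i]
        simpa using this
      · have hz : βs i = 0 := by
          by_contra h
          exact hi (hS ▸ Finset.mem_filter.2 ⟨Finset.mem_univ i, h⟩)
        simp [hi, Finset.mem_compl, hΔi i, hz]
    have hsum := Finset.sum_le_sum (fun i (_ : i ∈ Finset.univ) => key i)
    rw [Finset.sum_sub_distrib, Finset.sum_sub_distrib] at hsum
    rw [Finset.sum_ite_mem, Finset.univ_inter, Finset.sum_ite_mem,
      Finset.univ_inter] at hsum
    rw [l1, l1, hA, hB]
    exact hsum
  -- main inequality: Q ≤ 3 lam A - lam B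
  have h4' : lam * (l1 βs - l1 βh) ≤ lam * (A - B) :=
    mul_le_mul_of_nonneg_left h4 hlampos.le
  rw [hsplit] at hT
  have hmain : Δ ⬝ᵥ Mh *ᵥ Δ ≤ 3 * lam * A - lam * B := by linarith [hopt', hT, h4']
  -- cone condition
  have hcone : B ≤ 3 * A := by
    have : lam * B ≤ lam * (3 * A) := by linarith
    exact le_of_mul_le_mul_left this hlampos
  have hre := hRE Δ (by rw [← hAdef, ← hBdef]; linarith)
  -- Cauchy-Schwarz: A ≤ sqrt s * l2 Δ
  have hl2nn : 0 ≤ l2 Δ := Real.sqrt_nonneg _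
  have hsum2 : l2 Δ ^ 2 = ∑ i, Δ i ^ 2 := by
    rw [l2, Real.sq_sqrt (Finset.sum_nonneg fun i _ => sq_nonneg _)]
  have hCS : A ≤ Real.sqrt s * l2 Δ := by
    have h1 : A ^ 2 ≤ (s : ℝ) * l2 Δ ^ 2 := by
      rw [hA, hsum2]
      calc (∑ i ∈ S, |Δ i|) ^ 2 ≤ S.card * ∑ i ∈ S, |Δ i| ^ 2 :=
            sq_sum_le_card_mul_sum_sq
        _ ≤ (s : ℝ) * ∑ i, Δ i ^ 2 := by
            rw [hs]
            refine mul_le_mul_of_nonneg_left ?_ (Nat.cast_nonneg _)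
            refine Finset.sum_le_sum_of_subset_of_nonneg (Finset.subset_univ S)
              (fun i _ _ => sq_nonneg _) |>.trans_eq ?_
            simp [sq_abs]
    calc A = Real.sqrt (A ^ 2) := (Real.sqrt_sq hAnn).symm
      _ ≤ Real.sqrt ((s : ℝ) * l2 Δ ^ 2) := Real.sqrt_le_sqrt h1
      _ = Real.sqrt s * l2 Δ := by
          rw [Real.sqrt_mul (Nat.cast_nonneg _), Real.sqrt_sq hl2nn]
  -- finish
  have hsq : Real.sqrt s * Real.sqrt s = (s : ℝ) :=
    Real.mul_self_sqrt (Nat.cast_nonneg _)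
  have hsnn : (0:ℝ) ≤ Real.sqrt s := Real.sqrt_nonneg _
  rcases eq_or_lt_of_le hl2nn with hx0 | hx0
  · -- l2 Δ = 0
    have hA0 : A ≤ 0 := by rw [← hx0] at hCS; simpa using hCS
    have : l1 Δ ≤ 0 := by linarith
    have hrhs : 0 ≤ 24 * lam * C ^ 2 * (s : ℝ) := by positivity
    linarith
  · -- l2 Δ > 0
    have hx : l2 Δ ≤ 6 * lam * C ^ 2 * Real.sqrt s := by
      have h1 : l2 Δ ^ 2 / (2 * C ^ 2) ≤ 3 * lam * (Real.sqrt s * l2 Δ) := by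
        calc l2 Δ ^ 2 / (2 * C ^ 2) ≤ Δ ⬝ᵥ Mh *ᵥ Δ := hre
          _ ≤ 3 * lam * A - lam * B := hmain
          _ ≤ 3 * lam * A := by linarith [mul_nonneg hlampos.le hBnn]
          _ ≤ 3 * lam * (Real.sqrt s * l2 Δ) := by
              exact mul_le_mul_of_nonneg_left hCS (by positivity)
      have hC2 : (0:ℝ) < 2 * C ^ 2 := by positivity
      rw [div_le_iff₀ hC2] at h1
      nlinarith
    calc l1 Δ = A + B := hsplit
      _ ≤ 4 * A := by linarith
      _ ≤ 4 * (Real.sqrt s * l2 Δ) := by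
          have h := mul_le_mul_of_nonneg_left hCS (show (0:ℝ) ≤ 4 by norm_num)
          linarith
      _ ≤ 4 * (Real.sqrt s * (6 * lam * C ^ 2 * Real.sqrt s)) := by
          refine mul_le_mul_of_nonneg_left ?_ (by norm_num)
          exact mul_le_mul_of_nonneg_left hx hsnn
      _ = 24 * lam * C ^ 2 * (Real.sqrt s * Real.sqrt s) := by ring
      _ = 24 * lam * C ^ 2 * s := by rw [hsq]
end
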